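/- arXiv:2510.21453 — 3 statements merged into one kernel-verified Lean document; each statement's English description precedes it below -/
import Mathlib

section
/- Let M̂ be the latent-augmented MDP of a finite-horizon MDP M along an embedding kernel κ, let π̂ be a policy of M̂, and let π̄ be its marginalization. Then V^{π̄}_t(s) = Σ_{z ∈ Z} κ(s)(z) · V̂^{π̂}_t(z, s) for every 0 ≤ t ≤ T and every s ∈ S; in particular J(π̄) = Ĵ(π̂). -/
open Finset

/-- A finite-horizon MDP `M = (S, A, T, P, R, μ, γ)` with finite nonempty state space `S`
and finite nonempty action space `A` (nonemptiness is carried as typeclass assumptions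
where needed). Probability mass functions on a finite type are represented as nonnegative
real-valued functions summing to `1`. -/
structure FinMDP (S A : Type) [Fintype S] [Fintype A] where
  T : ℕ
  hT : 1 ≤ T
  P : S → A → S → ℝ
  P_nonneg : ∀ s a s', 0 ≤ P s a s'
  P_sum_one : ∀ s a, ∑ s' : S, P s a s' = 1
  R : S → A → ℝ
  μ : S → ℝ
  μ_nonneg : ∀ s, 0 ≤ μ s
  μ_sum_one : ∑ s : S, μ s = 1
  γ : ℝ
  γ_pos : 0 < γ
  γ_le_one : γ ≤ 1

/-- A policy `π = (π_t)_{0 ≤ t < T}`: for each time `t < T` and state `s`, a probability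
mass function `π_t(s)` on the action space. -/
structure FinPolicy (S A : Type) [Fintype A] (T : ℕ) where
  p : Fin T → S → A → ℝ
  nonneg : ∀ t s a, 0 ≤ p t s a
  sum_one : ∀ t s, ∑ a : A, p t s a = 1

variable {S A Z Z' : Type} [Fintype S] [Fintype A] [Fintype Z] [Fintype Z']

/-- Auxiliary backward recursion, indexed by the number `k` of remaining steps:
`Vaux k s` is the value at time `T - k` in state `s`. -/
noncomputable def FinMDP.Vaux (M : FinMDP S A) (π : FinPolicy S A M.T) : ℕ → S → ℝ
  | 0, _ => 0
  | k + 1, s =>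
      ∑ a : A,
        π.p ⟨M.T - (k + 1), Nat.sub_lt (Nat.lt_of_lt_of_le Nat.one_pos M.hT) (Nat.succ_pos k)⟩
            s a *
          (M.R s a + M.γ * ∑ s' : S, M.P s a s' * M.Vaux π k s')

/-- The value function `V^π_t(s)` (meaningful for `0 ≤ t ≤ T`): `V^π_T(s) = 0` and, for
`t < T`, `V^π_t(s) = ∑_a π_t(s)(a) · (R(s,a) + γ · ∑_{s'} P(s,a)(s') · V^π_{t+1}(s'))`. -/
noncomputable def FinMDP.V (M : FinMDP S A) (π : FinPolicy S A M.T) (t : ℕ) (s : S) : ℝ :=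
  M.Vaux π (M.T - t) s

/-- The expected return `J(π) = ∑_s μ(s) · V^π_0(s)`. -/
noncomputable def FinMDP.J (M : FinMDP S A) (π : FinPolicy S A M.T) : ℝ :=
  ∑ s : S, M.μ s * M.V π 0 s

/-- A policy `π⋆` is pointwise optimal for `M` if `V^{π⋆}_t(s) ≥ V^π_t(s)` for every
policy `π`, every `0 ≤ t ≤ T` and every state `s`. -/
def FinMDP.PointwiseOptimal (M : FinMDP S A) (πs : FinPolicy S A M.T) : Prop :=
  ∀ (π : FinPolicy S A M.T) (t : ℕ), t ≤ M.T → ∀ s : S, M.V π t s ≤ M.V πs t s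


/-- An embedding kernel `κ : S → PMF(Z)` into a finite latent space `Z`. -/
structure FinKernel (S Z : Type) [Fintype Z] where
  k : S → Z → ℝ
  nonneg : ∀ s z, 0 ≤ k s z
  sum_one : ∀ s, ∑ z : Z, k s z = 1

/-- The latent-augmented MDP `M̂` of `M` along the embedding kernel `κ`: state space `Z × S`,
initial distribution `μ̂(z,s) = μ(s)·κ(s)(z)`, transitions
`P̂((z,s),a)(z',s') = P(s,a)(s')·κ(s')(z')`, reward `R̂((z,s),a) = R(s,a)`. -/
noncomputable def FinMDP.latentAug (M : FinMDP S A) (κ : FinKernel S Z) :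
    FinMDP (Z × S) A where
  T := M.T
  hT := M.hT
  P := fun x a y => M.P x.2 a y.2 * κ.k y.2 y.1
  P_nonneg := fun _ _ _ => mul_nonneg (M.P_nonneg _ _ _) (κ.nonneg _ _)
  P_sum_one := by
    intro x a
    rw [Fintype.sum_prod_type, Finset.sum_comm]
    calc ∑ s' : S, ∑ z' : Z, M.P x.2 a s' * κ.k s' z'
        = ∑ s' : S, M.P x.2 a s' * ∑ z' : Z, κ.k s' z' := by simp [Finset.mul_sum]
      _ = 1 := by simp [κ.sum_one, M.P_sum_one]
  R := fun x a => M.R x.2 a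
  μ := fun x => M.μ x.2 * κ.k x.2 x.1
  μ_nonneg := fun _ => mul_nonneg (M.μ_nonneg _) (κ.nonneg _ _)
  μ_sum_one := by
    rw [Fintype.sum_prod_type, Finset.sum_comm]
    calc ∑ s : S, ∑ z : Z, M.μ s * κ.k s z
        = ∑ s : S, M.μ s * ∑ z : Z, κ.k s z := by simp [Finset.mul_sum]
      _ = 1 := by simp [κ.sum_one, M.μ_sum_one]
  γ := M.γ
  γ_pos := M.γ_pos
  γ_le_one := M.γ_le_one

/-- The lift `π↑` of a policy `π` of `M` to the latent-augmented MDP: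
`π↑_t(z, s) = π_t(s)`. -/
def FinPolicy.lift {T : ℕ} (Z : Type) (π : FinPolicy S A T) : FinPolicy (Z × S) A T where
  p t x a := π.p t x.2 a
  nonneg := fun t x a => π.nonneg t x.2 a
  sum_one := fun t x => π.sum_one t x.2

/-- The marginalization `π̄` of a policy `π̂` of the latent-augmented MDP:
`π̄_t(s)(a) = ∑_z κ(s)(z) · π̂_t(z, s)(a)`. -/
noncomputable def FinKernel.marg {T : ℕ} (κ : FinKernel S Z) (π : FinPolicy (Z × S) A T) :
    FinPolicy S A T where
  p t s a := ∑ z : Z, κ.k s z * π.p t (z, s) a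
  nonneg := fun t s a =>
    Finset.sum_nonneg fun z _ => mul_nonneg (κ.nonneg _ _) (π.nonneg _ _ _)
  sum_one := by
    intro t s
    rw [Finset.sum_comm]
    calc ∑ z : Z, ∑ a : A, κ.k s z * π.p t (z, s) a
        = ∑ z : Z, κ.k s z * ∑ a : A, π.p t (z, s) a := by simp [Finset.mul_sum]
      _ = 1 := by simp [π.sum_one, κ.sum_one]

lemma vaux_marg (M : FinMDP S A) (κ : FinKernel S Z) (πhat : FinPolicy (Z × S) A M.T) :
    ∀ (k : ℕ) (s : S), M.Vaux (κ.marg πhat) k s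
      = ∑ z : Z, κ.k s z * (M.latentAug κ).Vaux πhat k (z, s)
  | 0, s => by simp [FinMDP.Vaux]
  | (k + 1), s => by
    have IH := vaux_marg M κ πhat k
    show (∑ a : A, (κ.marg πhat).p _ s a *
        (M.R s a + M.γ * ∑ s' : S, M.P s a s' * M.Vaux (κ.marg πhat) k s'))
      = ∑ z : Z, κ.k s z * ∑ a : A, πhat.p _ (z, s) a *
        ((M.latentAug κ).R (z, s) a + (M.latentAug κ).γ *
          ∑ y : Z × S, (M.latentAug κ).P (z, s) a y * (M.latentAug κ).Vaux πhat k y)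
    have key : ∀ a z, (M.latentAug κ).R (z, s) a + (M.latentAug κ).γ *
          ∑ y : Z × S, (M.latentAug κ).P (z, s) a y * (M.latentAug κ).Vaux πhat k y
        = M.R s a + M.γ * ∑ s' : S, M.P s a s' * M.Vaux (κ.marg πhat) k s' := by
      intro a z
      have : ∑ y : Z × S, (M.latentAug κ).P (z, s) a y * (M.latentAug κ).Vaux πhat k y
          = ∑ s' : S, M.P s a s' * M.Vaux (κ.marg πhat) k s' := by
        rw [Fintype.sum_prod_type, Finset.sum_comm]
        refine Finset.sum_congr rfl fun s' _ => ?_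
        rw [IH s', Finset.mul_sum]
        refine Finset.sum_congr rfl fun z' _ => ?_
        show M.P s a s' * κ.k s' z' * (M.latentAug κ).Vaux πhat k (z', s') = _
        ring
      rw [this]; rfl
    simp only [key]
    simp only [Finset.mul_sum]
    rw [Finset.sum_comm]
    refine Finset.sum_congr rfl fun a _ => ?_
    show (∑ z : Z, κ.k s z * πhat.p _ (z, s) a) * _ = _
    rw [Finset.sum_mul]
    exact Finset.sum_congr rfl fun z _ => mul_assoc _ _ _

/-- For any policy `π̂` of the latent-augmented MDP, its marginalization `π̄` satisfies
`V^{π̄}_t(s) = ∑_z κ(s)(z) · V̂^{π̂}_t(z, s)` for all `0 ≤ t ≤ T` and `s ∈ S`; in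
particular `J(π̄) = Ĵ(π̂)`. -/
theorem stmt_5 [Nonempty S] [Nonempty A] [Nonempty Z]
    (M : FinMDP S A) (κ : FinKernel S Z) (πhat : FinPolicy (Z × S) A M.T) :
    (∀ (t : ℕ), t ≤ M.T → ∀ s : S,
        M.V (κ.marg πhat) t s = ∑ z : Z, κ.k s z * (M.latentAug κ).V πhat t (z, s))
      ∧ M.J (κ.marg πhat) = (M.latentAug κ).J πhat := by
  have hV : ∀ (t : ℕ), ∀ s : S,
      M.V (κ.marg πhat) t s = ∑ z : Z, κ.k s z * (M.latentAug κ).V πhat t (z, s) :=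
    fun t s => vaux_marg M κ πhat (M.T - t) s
  refine ⟨fun t _ s => hV t s, ?_⟩
  show ∑ s : S, M.μ s * M.V (κ.marg πhat) 0 s
      = ∑ y : Z × S, (M.μ y.2 * κ.k y.2 y.1) * (M.latentAug κ).V πhat 0 y
  rw [Fintype.sum_prod_type, Finset.sum_comm]
  refine Finset.sum_congr rfl fun s _ => ?_
  rw [hV 0 s, Finset.mul_sum]
  exact Finset.sum_congr rfl fun z _ => by ring
end

section
/- Let M̂ be the latent-augmented MDP of a finite-horizon MDP M along an embedding kernel κ, and let π⋆ be a pointwise optimal policy for M. Then for every policy π̂ of M̂, every 0 ≤ t ≤ T, every z ∈ Z, and every s ∈ S, one has V̂^{π̂}_t(z, s) ≤ V^{π⋆}_t(s); that is, augmenting the state with the latent embedding provides no information gain. -/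
open Finset

variable {S A Z Z' : Type} [Fintype S] [Fintype A] [Fintype Z] [Fintype Z']

lemma Vaux_congr (M : FinMDP S A) (π π' : FinPolicy S A M.T) :
    ∀ (k : ℕ), (∀ (t : Fin M.T), M.T - k ≤ t.val → ∀ s a, π.p t s a = π'.p t s a) →
    ∀ s, M.Vaux π k s = M.Vaux π' k s := by
  intro k
  induction k with
  | zero => simp [FinMDP.Vaux]
  | succ k ih =>
    intro h s
    have hk : ∀ (t : Fin M.T), M.T - k ≤ t.val → ∀ s a, π.p t s a = π'.p t s a := by
      intro t ht; exact h t (le_trans (by omega) ht)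
    simp only [FinMDP.Vaux]
    refine Finset.sum_congr rfl fun a _ => ?_
    have e1 := h ⟨M.T - (k + 1), Nat.sub_lt (Nat.lt_of_lt_of_le Nat.one_pos M.hT)
      (Nat.succ_pos k)⟩ (le_refl _) s a
    rw [e1]
    have e2 : ∑ s' : S, M.P s a s' * M.Vaux π k s' = ∑ s' : S, M.P s a s' * M.Vaux π' k s' :=
      Finset.sum_congr rfl fun s' _ => by rw [ih hk s']
    rw [e2]

lemma key_le [Nonempty S] [Nonempty A] [Nonempty Z]
    (M : FinMDP S A) (κ : FinKernel S Z)
    (πstar : FinPolicy S A M.T) (hstar : M.PointwiseOptimal πstar)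
    (πhat : FinPolicy (Z × S) A M.T) :
    ∀ (k : ℕ), k ≤ M.T → ∀ (z : Z) (s : S),
      (M.latentAug κ).Vaux πhat k (z, s) ≤ M.Vaux πstar k s := by
  intro k
  induction k with
  | zero => intro _ z s; simp [FinMDP.Vaux]
  | succ k ih =>
    intro hk z s
    have hk' : k ≤ M.T := Nat.le_of_succ_le hk
    have IH := ih hk'
    have ht0 : M.T - (k + 1) < M.T := Nat.sub_lt (Nat.lt_of_lt_of_le Nat.one_pos M.hT) (Nat.succ_pos k)
    set t0 : Fin M.T := ⟨M.T - (k + 1), ht0⟩ with ht0def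
    -- define modified policy
    set πmod : FinPolicy S A M.T :=
      { p := fun t s' a => if t = t0 then πhat.p t0 (z, s') a else πstar.p t s' a
        nonneg := by
          intro t s' a
          by_cases h : t = t0 <;> simp [h, πhat.nonneg, πstar.nonneg]
        sum_one := by
          intro t s'
          by_cases h : t = t0 <;> simp [h, πhat.sum_one, πstar.sum_one] } with hπmod
    have step1 : (M.latentAug κ).Vaux πhat (k + 1) (z, s) =
        ∑ a : A, πhat.p t0 (z, s) a *
          (M.R s a + M.γ * ∑ y : Z × S,
            (M.P s a y.2 * κ.k y.2 y.1) * (M.latentAug κ).Vaux πhat k y) := rfl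
    have hinner : ∀ a : A,
        ∑ y : Z × S, (M.P s a y.2 * κ.k y.2 y.1) * (M.latentAug κ).Vaux πhat k y
          ≤ ∑ s' : S, M.P s a s' * M.Vaux πstar k s' := by
      intro a
      rw [Fintype.sum_prod_type, Finset.sum_comm]
      have : ∀ s' : S, ∑ z' : Z, (M.P s a s' * κ.k s' z') * (M.latentAug κ).Vaux πhat k (z', s')
          ≤ M.P s a s' * M.Vaux πstar k s' := by
        intro s'
        have h1 : ∑ z' : Z, (M.P s a s' * κ.k s' z') * (M.latentAug κ).Vaux πhat k (z', s')
            ≤ ∑ z' : Z, (M.P s a s' * κ.k s' z') * M.Vaux πstar k s' := by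
          refine Finset.sum_le_sum fun z' _ => ?_
          exact mul_le_mul_of_nonneg_left (IH z' s')
            (mul_nonneg (M.P_nonneg _ _ _) (κ.nonneg _ _))
        calc _ ≤ ∑ z' : Z, (M.P s a s' * κ.k s' z') * M.Vaux πstar k s' := h1
          _ = M.P s a s' * M.Vaux πstar k s' := by
              rw [← Finset.sum_mul, ← Finset.mul_sum, κ.sum_one]
              ring
      exact Finset.sum_le_sum fun s' _ => this s'
    have step2 : (M.latentAug κ).Vaux πhat (k + 1) (z, s) ≤
        ∑ a : A, πhat.p t0 (z, s) a *
          (M.R s a + M.γ * ∑ s' : S, M.P s a s' * M.Vaux πstar k s') := by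
      rw [step1]
      refine Finset.sum_le_sum fun a _ => ?_
      refine mul_le_mul_of_nonneg_left ?_ (πhat.nonneg _ _ _)
      have := hinner a
      nlinarith [M.γ_pos]
    have htail : ∀ s', M.Vaux πmod k s' = M.Vaux πstar k s' := by
      refine Vaux_congr M πmod πstar k ?_
      intro t ht s' a
      have hne : t ≠ t0 := by
        intro h
        rw [h] at ht
        simp only [ht0def] at ht
        omega
      simp [hπmod, hne]
    have step3 : ∑ a : A, πhat.p t0 (z, s) a *
          (M.R s a + M.γ * ∑ s' : S, M.P s a s' * M.Vaux πstar k s')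
        = M.Vaux πmod (k + 1) s := by
      simp only [FinMDP.Vaux]
      refine Finset.sum_congr rfl fun a _ => ?_
      have heq : (⟨M.T - (k + 1), Nat.sub_lt (Nat.lt_of_lt_of_le Nat.one_pos M.hT)
          (Nat.succ_pos k)⟩ : Fin M.T) = t0 := rfl
      rw [heq]
      rw [show πmod.p t0 s a = πhat.p t0 (z, s) a from if_pos rfl]
      have : ∑ s' : S, M.P s a s' * M.Vaux πmod k s' = ∑ s' : S, M.P s a s' * M.Vaux πstar k s' :=
        Finset.sum_congr rfl fun s' _ => by rw [htail s']
      rw [this]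
    have step4 : M.Vaux πmod (k + 1) s ≤ M.Vaux πstar (k + 1) s := by
      have h := hstar πmod (M.T - (k + 1)) (Nat.sub_le _ _) s
      simpa [FinMDP.V, Nat.sub_sub_self hk] using h
    calc (M.latentAug κ).Vaux πhat (k + 1) (z, s) ≤ _ := step2
      _ = M.Vaux πmod (k + 1) s := step3
      _ ≤ M.Vaux πstar (k + 1) s := step4

/-- Augmenting the state with the latent embedding provides no information gain: for any
policy `π̂` of the latent-augmented MDP, `V̂^{π̂}_t(z, s) ≤ V^{π⋆}_t(s)` where `π⋆` is a
pointwise optimal policy for `M`. -/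
theorem stmt_8 [Nonempty S] [Nonempty A] [Nonempty Z]
    (M : FinMDP S A) (κ : FinKernel S Z)
    (πstar : FinPolicy S A M.T) (hstar : M.PointwiseOptimal πstar) :
    ∀ (πhat : FinPolicy (Z × S) A M.T) (t : ℕ), t ≤ M.T → ∀ (z : Z) (s : S),
      (M.latentAug κ).V πhat t (z, s) ≤ M.V πstar t s := by
  intro πhat t ht z s
  have h := key_le M κ πstar hstar πhat (M.T - t) (Nat.sub_le _ _) z s
  exact h
end

section
/- Let M̂ be the latent-augmented MDP of a finite-horizon MDP M along an embedding kernel κ, and let π̂⋆ be a pointwise optimal policy for M̂. Then its marginalization is a pointwise optimal policy for M; in other words, an optimal policy of the original MDP can be recovered from an optimal policy of the latent-augmented MDP. -/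
open Finset

variable {S A Z Z' : Type} [Fintype S] [Fintype A] [Fintype Z] [Fintype Z']

lemma FinMDP.Vaux_succ (M : FinMDP S A) (π : FinPolicy S A M.T) (k : ℕ) (s : S) :
    M.Vaux π (k + 1) s
      = ∑ a : A, π.p ⟨M.T - (k + 1),
          Nat.sub_lt (Nat.lt_of_lt_of_le Nat.one_pos M.hT) (Nat.succ_pos k)⟩ s a *
        (M.R s a + M.γ * ∑ s' : S, M.P s a s' * M.Vaux π k s') := rfl

/-- Value of a lifted policy in the latent-augmented MDP equals the original value. -/
lemma lift_Vaux (M : FinMDP S A) (κ : FinKernel S Z) (π : FinPolicy S A M.T) :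
    ∀ (k : ℕ) (z : Z) (s : S),
      (M.latentAug κ).Vaux (π.lift Z) k (z, s) = M.Vaux π k s := by
  intro k
  induction k with
  | zero => intro z s; rfl
  | succ k ih =>
    intro z s
    rw [FinMDP.Vaux_succ (M.latentAug κ) (π.lift Z) k (z, s), M.Vaux_succ]
    refine Finset.sum_congr rfl fun a _ => ?_
    have h : ∑ x : Z × S, (M.latentAug κ).P (z, s) a x * (M.latentAug κ).Vaux (π.lift Z) k x
        = ∑ s' : S, M.P s a s' * M.Vaux π k s' := by
      rw [Fintype.sum_prod_type, Finset.sum_comm]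
      refine Finset.sum_congr rfl fun s' _ => ?_
      have hP : ∀ z' : Z, (M.latentAug κ).P (z, s) a (z', s') = M.P s a s' * κ.k s' z' :=
        fun _ => rfl
      simp only [ih, hP]
      rw [← Finset.sum_mul, ← Finset.mul_sum, κ.sum_one, mul_one]
    show π.p _ s a * ((M.latentAug κ).R (z, s) a + (M.latentAug κ).γ * _) = _
    rw [h]
    rfl

/-- The value of the marginalized policy dominates the κ-average of the latent values. -/
lemma marg_Vaux_ge (M : FinMDP S A) (κ : FinKernel S Z) (πh : FinPolicy (Z × S) A M.T) :
    ∀ (k : ℕ) (s : S),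
      ∑ z : Z, κ.k s z * (M.latentAug κ).Vaux πh k (z, s) ≤ M.Vaux (κ.marg πh) k s := by
  intro k
  induction k with
  | zero => intro s; simp [FinMDP.Vaux]
  | succ k ih =>
    intro s
    rw [FinMDP.Vaux_succ]
    have hR : ∀ a : A, (κ.marg πh).p ⟨M.T - (k + 1),
            Nat.sub_lt (Nat.lt_of_lt_of_le Nat.one_pos M.hT) (Nat.succ_pos k)⟩ s a *
          (M.R s a + M.γ * ∑ s' : S, M.P s a s' * M.Vaux (κ.marg πh) k s')
        = ∑ z : Z, κ.k s z * πh.p ⟨M.T - (k + 1),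
            Nat.sub_lt (Nat.lt_of_lt_of_le Nat.one_pos M.hT) (Nat.succ_pos k)⟩ (z, s) a *
          (M.R s a + M.γ * ∑ s' : S, M.P s a s' * M.Vaux (κ.marg πh) k s') := by
      intro a
      show (∑ z : Z, κ.k s z * πh.p _ (z, s) a) * _ = _
      rw [Finset.sum_mul]
    simp only [hR]
    rw [Finset.sum_comm]
    refine Finset.sum_le_sum fun z _ => ?_
    rw [FinMDP.Vaux_succ (M.latentAug κ) πh k (z, s), Finset.mul_sum]
    refine Finset.sum_le_sum fun a _ => ?_
    rw [← mul_assoc]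
    have hcoef : (0:ℝ) ≤ κ.k s z * πh.p ⟨M.T - (k + 1),
        Nat.sub_lt (Nat.lt_of_lt_of_le Nat.one_pos M.hT) (Nat.succ_pos k)⟩ (z, s) a :=
      mul_nonneg (κ.nonneg _ _) (πh.nonneg _ _ _)
    refine mul_le_mul_of_nonneg_left ?_ hcoef
    show M.R s a + M.γ * ∑ x : Z × S, (M.latentAug κ).P (z, s) a x *
        (M.latentAug κ).Vaux πh k x ≤ _
    refine add_le_add_right (mul_le_mul_of_nonneg_left ?_ (le_of_lt M.γ_pos)) _
    rw [Fintype.sum_prod_type, Finset.sum_comm]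
    refine Finset.sum_le_sum fun s' _ => ?_
    calc ∑ z' : Z, (M.latentAug κ).P (z, s) a (z', s') * (M.latentAug κ).Vaux πh k (z', s')
        = M.P s a s' * ∑ z' : Z, κ.k s' z' * (M.latentAug κ).Vaux πh k (z', s') := by
          rw [Finset.mul_sum]
          refine Finset.sum_congr rfl fun z' _ => ?_
          show M.P s a s' * κ.k s' z' * _ = _
          ring
      _ ≤ M.P s a s' * M.Vaux (κ.marg πh) k s' :=
          mul_le_mul_of_nonneg_left (ih s') (M.P_nonneg _ _ _)

/-- The marginalization of a pointwise optimal policy for the latent-augmented MDP `M̂` is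
a pointwise optimal policy for `M`. -/
theorem stmt_10 [Nonempty S] [Nonempty A] [Nonempty Z]
    (M : FinMDP S A) (κ : FinKernel S Z)
    (πhatstar : FinPolicy (Z × S) A M.T)
    (hhatstar : (M.latentAug κ).PointwiseOptimal πhatstar) :
    M.PointwiseOptimal (κ.marg πhatstar) := by
  intro π t ht s
  have h1 : M.V π t s
      = ∑ z : Z, κ.k s z * (M.latentAug κ).Vaux (π.lift Z) (M.T - t) (z, s) := by
    simp only [lift_Vaux, FinMDP.V, ← Finset.sum_mul, κ.sum_one, one_mul]
  have h2 : ∀ z : Z, (M.latentAug κ).Vaux (π.lift Z) (M.T - t) (z, s)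
      ≤ (M.latentAug κ).Vaux πhatstar (M.T - t) (z, s) :=
    fun z => hhatstar (π.lift Z) t ht (z, s)
  calc M.V π t s
      ≤ ∑ z : Z, κ.k s z * (M.latentAug κ).Vaux πhatstar (M.T - t) (z, s) := by
        rw [h1]
        exact Finset.sum_le_sum fun z _ =>
          mul_le_mul_of_nonneg_left (h2 z) (κ.nonneg _ _)
    _ ≤ M.V (κ.marg πhatstar) t s := marg_Vaux_ge M κ πhatstar (M.T - t) s
end
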